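/- Let G_π = (A, B, E) be a bipartite ordered permutation graph with parts A (type-A vertices) and B (type-B vertices). Then the natural ordering 1 < 2 < … < n restricted to A and to B is a strong ordering: for all edges {a,b}, {a',b'} ∈ E with a,a' ∈ A, b,b' ∈ B, if a < a' and b > b', then {a,b'} ∈ E and {a',b} ∈ E. -/

import Mathlib

/- An edge at a type-A vertex a' leads upwards, so a < a' < b' < b. Since b' is a
right-to-left minimum and a' a left-to-right maximum of π⁻¹, the inversion at the edge {a, b}
extends to π⁻¹ b' ≤ π⁻¹ b < π⁻¹ a ≤ π⁻¹ a', which gives both new edges. -/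

def permGraph {n : ℕ} (π : Equiv.Perm (Fin n)) : SimpleGraph (Fin n) :=
  SimpleGraph.fromRel (fun u v => u < v ∧ π.symm v < π.symm u)

def typeA {n : ℕ} (π : Equiv.Perm (Fin n)) (v : Fin n) : Prop :=
  ∀ u, u ≤ v → π.symm u ≤ π.symm v

def typeB {n : ℕ} (π : Equiv.Perm (Fin n)) (v : Fin n) : Prop :=
  ∀ u, v ≤ u → π.symm v ≤ π.symm u

lemma permGraph_adj_of_lt {n : ℕ} {π : Equiv.Perm (Fin n)} {u v : Fin n}
    (huv : u < v) (hπ : π.symm v < π.symm u) : (permGraph π).Adj u v :=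
  ⟨huv.ne, Or.inl ⟨huv, hπ⟩⟩

lemma permGraph_adj_iff_of_lt {n : ℕ} {π : Equiv.Perm (Fin n)} {u v : Fin n}
    (huv : u < v) : (permGraph π).Adj u v ↔ π.symm v < π.symm u := by
  refine ⟨?_, permGraph_adj_of_lt huv⟩
  rintro ⟨-, ⟨-, h⟩ | ⟨hvu, -⟩⟩
  · exact h
  · exact absurd huv hvu.not_gt

lemma typeA.lt_of_permGraph_adj {n : ℕ} {π : Equiv.Perm (Fin n)} {a b : Fin n}
    (ha : typeA π a) (hab : (permGraph π).Adj a b) : a < b := by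
  obtain ⟨-, ⟨h, -⟩ | ⟨hba, hπ⟩⟩ := hab
  · exact h
  · exact absurd (ha b hba.le) hπ.not_ge

theorem stmt_15_general {n : ℕ} (π : Equiv.Perm (Fin n))
    (a a' b b' : Fin n)
    (ha' : typeA π a') (hb' : typeB π b')
    (hab : (permGraph π).Adj a b) (hab' : (permGraph π).Adj a' b')
    (haa : a < a') (hbb : b' < b) :
    (permGraph π).Adj a b' ∧ (permGraph π).Adj a' b := by
  have ha'b' : a' < b' := ha'.lt_of_permGraph_adj hab'
  have hπab : π.symm b < π.symm a :=
    (permGraph_adj_iff_of_lt (haa.trans (ha'b'.trans hbb))).mp hab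
  exact ⟨permGraph_adj_of_lt (haa.trans ha'b') ((hb' b hbb.le).trans_lt hπab),
    permGraph_adj_of_lt (ha'b'.trans hbb) (hπab.trans_le (ha' a haa.le))⟩

theorem stmt_15 {n : ℕ} (π : Equiv.Perm (Fin n))
    (hbip : (permGraph π).Colorable 2)
    (a a' b b' : Fin n)
    (ha : typeA π a) (ha' : typeA π a') (hb : typeB π b) (hb' : typeB π b')
    (hab : (permGraph π).Adj a b) (hab' : (permGraph π).Adj a' b')
    (haa : a < a') (hbb : b' < b) :
    (permGraph π).Adj a b' ∧ (permGraph π).Adj a' b :=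
  stmt_15_general π a a' b b' ha' hb' hab hab' haa hbb
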